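/- arXiv:1503.00689 — 6 statements merged into one kernel-verified Lean document; each statement's English description precedes it below -/
import Mathlib

section
/- Let U ⊆ ℝⁿ be a nonempty connected open set and Φ : ℝⁿ → ℝ be twice continuously differentiable on U. Then Hess Φ(x)(x, v) = 0 for all x ∈ U and all v ∈ ℝⁿ if and only if there exists a constant c ∈ ℝ such that DΦ(x)(x) = Φ(x) + c for all x ∈ U (i.e., the potential Φ is extensive up to an additive constant). -/
/-!
Let `g(x) = DΦ(x)(x) - Φ(x)` be the defect in the Euler relation.
By the product rule `Dg(x)(v) = D²Φ(x)(v, x) + DΦ(x)(v) - DΦ(x)(v) = D²Φ(x)(v, x)`, and by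
symmetry of the second derivative this is `Hess Φ(x)(x, v)`. So the Hessian contracted with `x`
vanishes on `U` exactly when `g` has zero derivative on `U`, i.e. (as `U` is open and connected)
exactly when `g` is constant on `U`.
-/

variable {E F : Type*} [NormedAddCommGroup E] [NormedSpace ℝ E]
  [NormedAddCommGroup F] [NormedSpace ℝ F]

noncomputable def eulerDefect (Φ : E → F) (x : E) : F :=
  fderiv ℝ Φ x x - Φ x

theorem hasFDerivAt_eulerDefect {Φ : E → F} {x : E} (hΦ : ContDiffAt ℝ 2 Φ x) :
    HasFDerivAt (eulerDefect Φ) (fderiv ℝ (fderiv ℝ Φ) x x) x := by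
  have hD : DifferentiableAt ℝ (fderiv ℝ Φ) x :=
    (hΦ.fderiv_right (m := 1) (by norm_num)).differentiableAt one_ne_zero
  have hprod : HasFDerivAt (fun y => fderiv ℝ Φ y y)
      ((fderiv ℝ Φ x).comp (ContinuousLinearMap.id ℝ E) + (fderiv ℝ (fderiv ℝ Φ) x).flip x) x :=
    hD.hasFDerivAt.clm_apply (hasFDerivAt_id x)
  refine (hprod.sub (hΦ.differentiableAt (by norm_num)).hasFDerivAt).congr_fderiv ?_
  ext v
  simp [(hΦ.isSymmSndFDerivAt (by simp)).eq v x]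

theorem fderiv_fderiv_apply_self_eq_zero_iff_exists_eulerDefect_eq {U : Set E} (hU : IsOpen U)
    (hconn : IsPreconnected U) {Φ : E → F} (hΦ : ContDiffOn ℝ 2 Φ U) :
    (∀ x ∈ U, fderiv ℝ (fderiv ℝ Φ) x x = 0) ↔ ∃ c, ∀ x ∈ U, eulerDefect Φ x = c := by
  have hderiv : ∀ x ∈ U, HasFDerivAt (eulerDefect Φ) (fderiv ℝ (fderiv ℝ Φ) x x) x :=
    fun x hx => hasFDerivAt_eulerDefect (hΦ.contDiffAt (hU.mem_nhds hx))
  constructor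
  · intro hflat
    refine hU.exists_is_const_of_fderiv_eq_zero hconn
      (fun x hx => (hderiv x hx).differentiableAt.differentiableWithinAt) fun x hx => ?_
    rw [(hderiv x hx).fderiv, hflat x hx, Pi.zero_apply]
  · rintro ⟨c, hc⟩ x hx
    have hconst : eulerDefect Φ =ᶠ[nhds x] fun _ => c :=
      Filter.eventually_of_mem (hU.mem_nhds hx) hc
    exact (hderiv x hx).unique ((hasFDerivAt_const c x).congr_of_eventuallyEq hconst)

theorem radiant_flat_zero_iff_potential_extensive_general
    (n : ℕ) (U : Set (EuclideanSpace ℝ (Fin n))) (hU : IsOpen U)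
    (hconn : IsPreconnected U)
    (Φ : EuclideanSpace ℝ (Fin n) → ℝ) (hΦ : ContDiffOn ℝ 2 Φ U) :
    (∀ x ∈ U, ∀ v, fderiv ℝ (fderiv ℝ Φ) x x v = 0) ↔
      (∃ c : ℝ, ∀ x ∈ U, fderiv ℝ Φ x x = Φ x + c) := by
  simpa [ContinuousLinearMap.ext_iff, eulerDefect, sub_eq_iff_eq_add'] using
    fderiv_fderiv_apply_self_eq_zero_iff_exists_eulerDefect_eq hU hconn hΦ

/-- **ρ♭ = 0 iff the potential is extensive up to an additive constant.**
On a nonempty connected open set `U ⊆ ℝⁿ` and for `Φ` twice continuously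
differentiable on `U`, one has `Hess Φ(x)(x, v) = 0` for all `x ∈ U`, `v ∈ ℝⁿ`
iff there is a constant `c` with `DΦ(x)(x) = Φ(x) + c` on `U` (Euler relation). -/
theorem radiant_flat_zero_iff_potential_extensive
    (n : ℕ) (U : Set (EuclideanSpace ℝ (Fin n))) (hU : IsOpen U)
    (hne : U.Nonempty) (hconn : IsPreconnected U)
    (Φ : EuclideanSpace ℝ (Fin n) → ℝ) (hΦ : ContDiffOn ℝ 2 Φ U) :
    (∀ x ∈ U, ∀ v, fderiv ℝ (fderiv ℝ Φ) x x v = 0) ↔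
      (∃ c : ℝ, ∀ x ∈ U, fderiv ℝ Φ x x = Φ x + c) :=
  radiant_flat_zero_iff_potential_extensive_general n U hU hconn Φ hΦ
end

section
/- Let U ⊆ ℝⁿ be open and g : ℝⁿ → (ℝⁿ →L ℝⁿ →L ℝ) be a differentiable field of symmetric bilinear forms on U satisfying the Codazzi equation: (Dg(x)(u))(v, w) = (Dg(x)(v))(u, w) for all x ∈ U and u, v, w ∈ ℝⁿ. Let X, Y : ℝⁿ → ℝⁿ be differentiable vector fields on U such that g(x)(X(x), v) = 0 and g(x)(Y(x), v) = 0 for all x ∈ U and v ∈ ℝⁿ. Then g(x)((DY(x))(X(x)) − (DX(x))(Y(x)), v) = 0 for all x ∈ U and v ∈ ℝⁿ. (The distribution of null vectors of ♭ is involutive.) -/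
/-- **The null distribution of a Codazzi tensor is involutive.**
Let `g` be a differentiable field of symmetric bilinear forms on an open set
`U ⊆ ℝⁿ` satisfying the Codazzi equation `(Dg(x)u)(v,w) = (Dg(x)v)(u,w)`.
If the differentiable vector fields `X`, `Y` are null for `g` on `U`, then so
is their Lie bracket `[X,Y](x) = DY(x)(X(x)) − DX(x)(Y(x))`. -/
theorem null_distribution_involutive
    (n : ℕ) (U : Set (EuclideanSpace ℝ (Fin n))) (hU : IsOpen U)
    (g : EuclideanSpace ℝ (Fin n) →
      (EuclideanSpace ℝ (Fin n) →L[ℝ] EuclideanSpace ℝ (Fin n) →L[ℝ] ℝ))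
    (hg : DifferentiableOn ℝ g U)
    (hsymm : ∀ x ∈ U, ∀ v w, g x v w = g x w v)
    (hcodazzi : ∀ x ∈ U, ∀ u v w, fderiv ℝ g x u v w = fderiv ℝ g x v u w)
    (X Y : EuclideanSpace ℝ (Fin n) → EuclideanSpace ℝ (Fin n))
    (hX : DifferentiableOn ℝ X U) (hY : DifferentiableOn ℝ Y U)
    (hXnull : ∀ x ∈ U, ∀ v, g x (X x) v = 0)
    (hYnull : ∀ x ∈ U, ∀ v, g x (Y x) v = 0) :
    ∀ x ∈ U, ∀ v, g x (fderiv ℝ Y x (X x) - fderiv ℝ X x (Y x)) v = 0 := by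
  have key : ∀ Z : EuclideanSpace ℝ (Fin n) → EuclideanSpace ℝ (Fin n),
      DifferentiableOn ℝ Z U → (∀ y ∈ U, ∀ v, g y (Z y) v = 0) →
      ∀ x ∈ U, ∀ u v, g x (fderiv ℝ Z x u) v = - fderiv ℝ g x u (Z x) v := by
    intro Z hZ hZnull x hx u v
    have hgx : DifferentiableAt ℝ g x := hg.differentiableAt (hU.mem_nhds hx)
    have hZx : DifferentiableAt ℝ Z x := hZ.differentiableAt (hU.mem_nhds hx)
    have hf0 : (fun y => g y (Z y)) =ᶠ[nhds x]
        (fun _ => (0 : EuclideanSpace ℝ (Fin n) →L[ℝ] ℝ)) := by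
      filter_upwards [hU.mem_nhds hx] with y hy
      ext w
      exact hZnull y hy w
    have hd : fderiv ℝ (fun y => g y (Z y)) x = 0 := by
      rw [hf0.fderiv_eq]
      exact fderiv_const_apply 0
    rw [fderiv_clm_apply hgx hZx] at hd
    have := congrFun (congrArg (fun T => fun u => (T u : _)) hd) u
    have h2 := congrFun (congrArg DFunLike.coe this) v
    simp only [ContinuousLinearMap.add_apply, ContinuousLinearMap.comp_apply,
      ContinuousLinearMap.flip_apply, ContinuousLinearMap.zero_apply] at h2
    linarith
  intro x hx v
  rw [map_sub, ContinuousLinearMap.sub_apply,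
    key Y hY hYnull x hx (X x) v, key X hX hXnull x hx (Y x) v,
    hcodazzi x hx (X x) (Y x) v]
  ring
end

section
/- Let U ⊆ ℝⁿ be open and Φ : ℝⁿ → ℝ be three times continuously differentiable on U. Let X, Y : ℝⁿ → ℝⁿ be differentiable vector fields on U such that Hess Φ(x)(X(x), v) = 0 and Hess Φ(x)(Y(x), v) = 0 for all x ∈ U and v ∈ ℝⁿ. Then Hess Φ(x)([X,Y](x), v) = 0 for all x ∈ U and v ∈ ℝⁿ, where [X,Y](x) = (DY(x))(X(x)) − (DX(x))(Y(x)). (Null vector fields of a degenerate Hessian metric are closed under Lie bracket.) -/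
/-!
Differentiating the identities `D²Φ(y)(X y) = 0` and `D²Φ(y)(Y y) = 0` at `x`, in the directions
`Y x` and `X x` respectively, gives `D³Φ(x)(Y, X) + D²Φ(x)(DX(x) Y) = 0` and
`D³Φ(x)(X, Y) + D²Φ(x)(DY(x) X) = 0`. Since `D³Φ(x)` is symmetric, subtracting the two
identities leaves `D²Φ(x)([X, Y](x)) = 0`. More generally, for any `C²` map `f` the fields
annihilated by `Df` are closed under the bracket; the theorem is the case `f = DΦ`.
-/

open Filter Topology VectorField

section

variable {𝕜 : Type*} [NontriviallyNormedField 𝕜]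
  {E : Type*} [NormedAddCommGroup E] [NormedSpace 𝕜 E]
  {F : Type*} [NormedAddCommGroup F] [NormedSpace 𝕜 F]
  {G : Type*} [NormedAddCommGroup G] [NormedSpace 𝕜 G]

theorem fderiv_apply_add_apply_fderiv_eq_zero_of_eventually_eq_zero
    {g : E → F →L[𝕜] G} {u : E → F} {x : E}
    (hg : DifferentiableAt 𝕜 g x) (hu : DifferentiableAt 𝕜 u x)
    (hgu : ∀ᶠ y in 𝓝 x, g y (u y) = 0) (w : E) :
    fderiv 𝕜 g x w (u x) + g x (fderiv 𝕜 u x w) = 0 := by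
  have hzero : fderiv 𝕜 (fun y => g y (u y)) x = 0 := by
    rw [EventuallyEq.fderiv_eq (f := fun _ => 0) hgu]
    exact fderiv_const_apply 0
  have := congrArg (fun L => L w) ((fderiv_clm_apply hg hu).symm.trans hzero)
  simpa [add_comm] using this

theorem fderiv_lieBracket_eq_zero_of_eventually_fderiv_eq_zero
    {f : E → F} {X Y : E → E} {x : E}
    (hf : DifferentiableAt 𝕜 (fderiv 𝕜 f) x) (hsymm : IsSymmSndFDerivAt 𝕜 f x)
    (hX : DifferentiableAt 𝕜 X x) (hY : DifferentiableAt 𝕜 Y x)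
    (hXf : ∀ᶠ y in 𝓝 x, fderiv 𝕜 f y (X y) = 0)
    (hYf : ∀ᶠ y in 𝓝 x, fderiv 𝕜 f y (Y y) = 0) :
    fderiv 𝕜 f x (lieBracket 𝕜 X Y x) = 0 := by
  have hXY := fderiv_apply_add_apply_fderiv_eq_zero_of_eventually_eq_zero hf hX hXf (Y x)
  have hYX := fderiv_apply_add_apply_fderiv_eq_zero_of_eventually_eq_zero hf hY hYf (X x)
  rw [lieBracket, map_sub]
  linear_combination (norm := module) hYX - hXY - hsymm (X x) (Y x)

end

/-- **Null vector fields of a degenerate Hessian metric are closed under Lie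
bracket.** For `Φ` three times continuously differentiable on an open set
`U ⊆ ℝⁿ` and differentiable vector fields `X`, `Y` null for the Hessian metric
`g = Hess Φ` on `U`, the Lie bracket `[X,Y](x) = DY(x)(X(x)) − DX(x)(Y(x))` is
also null for `Hess Φ` on `U`. -/
theorem hessian_null_fields_closed_under_bracket
    (n : ℕ) (U : Set (EuclideanSpace ℝ (Fin n))) (hU : IsOpen U)
    (Φ : EuclideanSpace ℝ (Fin n) → ℝ) (hΦ : ContDiffOn ℝ 3 Φ U)
    (X Y : EuclideanSpace ℝ (Fin n) → EuclideanSpace ℝ (Fin n))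
    (hX : DifferentiableOn ℝ X U) (hY : DifferentiableOn ℝ Y U)
    (hXnull : ∀ x ∈ U, ∀ v, fderiv ℝ (fderiv ℝ Φ) x (X x) v = 0)
    (hYnull : ∀ x ∈ U, ∀ v, fderiv ℝ (fderiv ℝ Φ) x (Y x) v = 0) :
    ∀ x ∈ U, ∀ v,
      fderiv ℝ (fderiv ℝ Φ) x (fderiv ℝ Y x (X x) - fderiv ℝ X x (Y x)) v = 0 := by
  intro x hx v
  have hUx : U ∈ 𝓝 x := hU.mem_nhds hx
  have hDΦ : ContDiffAt ℝ 2 (fderiv ℝ Φ) x :=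
    (hΦ.contDiffAt hUx).fderiv_right (by norm_num)
  have hnull : ∀ Z : EuclideanSpace ℝ (Fin n) → EuclideanSpace ℝ (Fin n),
      (∀ y ∈ U, ∀ v, fderiv ℝ (fderiv ℝ Φ) y (Z y) v = 0) →
        ∀ᶠ y in 𝓝 x, fderiv ℝ (fderiv ℝ Φ) y (Z y) = 0 := fun Z hZ =>
    eventually_of_mem hUx fun y hy => ContinuousLinearMap.ext (hZ y hy)
  have hbracket := fderiv_lieBracket_eq_zero_of_eventually_fderiv_eq_zero
    ((hDΦ.fderiv_right le_rfl).differentiableAt one_ne_zero)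
    (hDΦ.isSymmSndFDerivAt (by simp))
    ((hX x hx).differentiableAt hUx) ((hY x hx).differentiableAt hUx)
    (hnull X hXnull) (hnull Y hYnull)
  change fderiv ℝ (fderiv ℝ Φ) x (lieBracket ℝ X Y x) v = 0
  rw [hbracket, zero_apply]
end

section
/- Let r ≤ n, let V ⊆ ℝ^r be a nonempty connected open set, and let f : ℝ^r → ℝⁿ be twice differentiable on V with D(Df)(x) = 0 for all x ∈ V, and suppose Df(x₀) is injective for some x₀ ∈ V. Then there exist a continuous linear equivalence B : ℝⁿ ≃ ℝⁿ and constants c_{r}, …, c_{n−1} ∈ ℝ such that for every x ∈ V and every index A with r ≤ A < n, the A-th coordinate of B(f(x)) equals c_A. (Hessian submanifolds are embedded, and there is a thermodynamic representation serving as a slice coordinate chart for them.) -/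
/-!
Since `D(Df)` vanishes on the connected open set `V`, `Df` is constant there, equal to the
injective map `L = Df(x₀)`, and so `f x = f x₀ + L (x - x₀)` on `V`. Any two injective linear maps
from `ℝ^r` into `ℝⁿ` differ by a linear automorphism of `ℝⁿ` (extend the isomorphism between their
ranges across complements); taking `B` with `B ∘ L` the inclusion of `ℝ^r` as the first `r`
coordinates, the last `n - r` coordinates of `B (f x)` are those of `B (f x₀)`.
-/

open Set

theorem IsOpen.eqOn_affine_of_fderiv_fderiv_eq_zero
    {E F : Type*} [NormedAddCommGroup E] [NormedSpace ℝ E] [NormedAddCommGroup F] [NormedSpace ℝ F]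
    {V : Set E} (hV : IsOpen V) (hconn : IsPreconnected V) {f : E → F}
    (hf : DifferentiableOn ℝ f V) (hf' : DifferentiableOn ℝ (fderiv ℝ f) V)
    (hf'' : ∀ x ∈ V, fderiv ℝ (fderiv ℝ f) x = 0) {x₀ : E} (hx₀ : x₀ ∈ V) :
    EqOn f (fun x ↦ f x₀ + fderiv ℝ f x₀ (x - x₀)) V := by
  set L := fderiv ℝ f x₀
  have hDf : ∀ x ∈ V, fderiv ℝ f x = L := fun x hx ↦
    hV.is_const_of_fderiv_eq_zero hconn hf' hf'' hx hx₀
  have hg : Differentiable ℝ (fun x ↦ f x₀ + L (x - x₀)) := by fun_prop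
  refine hV.eqOn_of_fderiv_eq hconn hf hg.differentiableOn (fun x hx ↦ ?_) hx₀ (by simp)
  rw [hDf x hx, fderiv_const_add]
  simp only [map_sub]
  rw [fderiv_sub_const, L.fderiv]

theorem LinearMap.exists_linearEquiv_comp_eq_of_injective
    {K E F : Type*} [DivisionRing K] [AddCommGroup E] [Module K E] [FiniteDimensional K E]
    [AddCommGroup F] [Module K F] {L J : E →ₗ[K] F}
    (hL : Function.Injective L) (hJ : Function.Injective J) :
    ∃ B : F ≃ₗ[K] F, ∀ v, B (L v) = J v := by
  obtain ⟨B, hB⟩ := Submodule.exists_linearEquiv_restrict_eq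
    ((LinearEquiv.ofInjective L hL).symm ≪≫ₗ LinearEquiv.ofInjective J hJ)
  exact ⟨B, fun v ↦ by simpa using (hB (LinearEquiv.ofInjective L hL v)).symm⟩

namespace EuclideanSpace

noncomputable def extendByZero {ι κ : Type*} (e : ι → κ) :
    EuclideanSpace ℝ ι →ₗ[ℝ] EuclideanSpace ℝ κ :=
  (WithLp.linearEquiv 2 ℝ (κ → ℝ)).symm.toLinearMap ∘ₗ Function.ExtendByZero.linearMap ℝ e ∘ₗ
    (WithLp.linearEquiv 2 ℝ (ι → ℝ)).toLinearMap

variable {ι κ : Type*} {e : ι → κ}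

theorem extendByZero_apply_of_notMem_range (v : EuclideanSpace ℝ ι) {k : κ} (hk : k ∉ range e) :
    extendByZero e v k = 0 :=
  Function.extend_apply' _ _ _ hk

theorem extendByZero_injective (he : Function.Injective e) :
    Function.Injective (extendByZero e) :=
  (WithLp.linearEquiv 2 ℝ (κ → ℝ)).symm.injective.comp <|
    (Function.extend_injective he (0 : κ → ℝ)).comp (WithLp.linearEquiv 2 ℝ (ι → ℝ)).injective

end EuclideanSpace

theorem affine_immersion_has_linear_slice_chart_general
    (r n : ℕ) (hrn : r ≤ n)
    (V : Set (EuclideanSpace ℝ (Fin r))) (hV : IsOpen V)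
    (hconn : IsPreconnected V)
    (f : EuclideanSpace ℝ (Fin r) → EuclideanSpace ℝ (Fin n))
    (hf : DifferentiableOn ℝ f V)
    (hf' : DifferentiableOn ℝ (fderiv ℝ f) V)
    (hf'' : ∀ x ∈ V, fderiv ℝ (fderiv ℝ f) x = 0)
    (x₀ : EuclideanSpace ℝ (Fin r)) (hx₀ : x₀ ∈ V)
    (hinj : Function.Injective (fderiv ℝ f x₀)) :
    ∃ (B : EuclideanSpace ℝ (Fin n) ≃L[ℝ] EuclideanSpace ℝ (Fin n))
      (c : Fin n → ℝ),
      ∀ x ∈ V, ∀ A : Fin n, r ≤ (A : ℕ) → B (f x) A = c A := by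
  obtain ⟨B, hB⟩ := LinearMap.exists_linearEquiv_comp_eq_of_injective
    (L := (fderiv ℝ f x₀ : _ →ₗ[ℝ] _)) hinj
    (EuclideanSpace.extendByZero_injective (Fin.castLE_injective hrn))
  refine ⟨B.toContinuousLinearEquiv, fun A ↦ B (f x₀) A, fun x hx A hA ↦ ?_⟩
  have hA' : A ∉ range (Fin.castLE hrn) := by
    rintro ⟨i, rfl⟩
    exact absurd hA (by simp)
  have hBL : B (fderiv ℝ f x₀ (x - x₀)) = EuclideanSpace.extendByZero (Fin.castLE hrn) (x - x₀) :=
    hB (x - x₀)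
  rw [hV.eqOn_affine_of_fderiv_fderiv_eq_zero hconn hf hf' hf'' hx₀ hx,
    LinearEquiv.coe_toContinuousLinearEquiv', map_add, hBL, PiLp.add_apply,
    EuclideanSpace.extendByZero_apply_of_notMem_range _ hA', add_zero]

/-- **Hessian submanifolds are embedded with slice thermodynamic
representations.** Let `r ≤ n`, let `f : ℝ^r → ℝⁿ` be twice differentiable on a
nonempty connected open set `V` with `D(Df) = 0` on `V` (an affine immersion
into affine coordinates) and suppose `Df(x₀)` is injective at some `x₀ ∈ V`.
Then there is a continuous linear equivalence `B` of `ℝⁿ` and constants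
`c_A` (`r ≤ A < n`) such that the `A`-th coordinate of `B(f(x))` equals `c_A`
for all `x ∈ V`: the linear coordinate change `B` produces a thermodynamic
representation that is a slice chart for the image of `f`. -/
theorem affine_immersion_has_linear_slice_chart
    (r n : ℕ) (hrn : r ≤ n)
    (V : Set (EuclideanSpace ℝ (Fin r))) (hV : IsOpen V)
    (hne : V.Nonempty) (hconn : IsPreconnected V)
    (f : EuclideanSpace ℝ (Fin r) → EuclideanSpace ℝ (Fin n))
    (hf : DifferentiableOn ℝ f V)
    (hf' : DifferentiableOn ℝ (fderiv ℝ f) V)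
    (hf'' : ∀ x ∈ V, fderiv ℝ (fderiv ℝ f) x = 0)
    (x₀ : EuclideanSpace ℝ (Fin r)) (hx₀ : x₀ ∈ V)
    (hinj : Function.Injective (fderiv ℝ f x₀)) :
    ∃ (B : EuclideanSpace ℝ (Fin n) ≃L[ℝ] EuclideanSpace ℝ (Fin n))
      (c : Fin n → ℝ),
      ∀ x ∈ V, ∀ A : Fin n, r ≤ (A : ℕ) → B (f x) A = c A :=
  affine_immersion_has_linear_slice_chart_general r n hrn V hV hconn f hf hf' hf'' x₀ hx₀ hinj
end

section
/- Let c, K, R, S₀ ∈ ℝ with c, R, K > 0, and define the ideal gas entropy S(u, v, n) = n·R·log(K·v·u^c·n^{−(c+1)}) + S₀ on the open positive octant of ℝ³. Then for every point p = (u,v,n) with u, v, n > 0, the Hessian of −S at p is given by the matrix R·[[c·n/u², 0, −c/u], [0, n/v², −1/v], [−c/u, −1/v, (c+1)/n]] with respect to the coordinates (u,v,n), and this matrix applied to the vector (u, v, n) is zero (the Euler vector field lies in the kernel of ♭). -/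
/-- The entropy of an ideal gas as a function of internal energy `u`,
volume `v`, and number of particles `n`:
`S(u,v,n) = n·R·log(K·v·u^c·n^(−(c+1))) + S₀`. -/
noncomputable def idealGasEntropy (c K R S₀ : ℝ) (u v n : ℝ) : ℝ :=
  n * R * Real.log (K * v * u ^ c * n ^ (-(c + 1))) + S₀

/-- The negative ideal gas entropy as a function on `ℝ³`
(coordinates `(u, v, n)` in the entropy representation). -/
noncomputable def idealGasPotential (c K R S₀ : ℝ)
    (p : EuclideanSpace ℝ (Fin 3)) : ℝ :=
  -idealGasEntropy c K R S₀ (p 0) (p 1) (p 2)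

/-! On the positive octant the logarithm in `S` splits as
`log K + log v + c log u - (c + 1) log n`, so `-S` is smooth there with gradient
`R (-c n / u, -n / v, (c + 1) - log (K v u^c n^{-(c+1)}))`, and differentiating each
component once more gives the columns of the Hessian.
The Euler vector lies in its kernel because `-S` is positively homogeneous of degree one,
so its gradient is homogeneous of degree zero. -/

open Real Filter Topology

section Hessian

variable {ι : Type*} [Fintype ι] {p : EuclideanSpace ℝ ι}

theorem EuclideanSpace.hasFDerivAt_inv_apply {i : ι} (hp : p i ≠ 0) :
    HasFDerivAt (fun q : EuclideanSpace ℝ ι => (q i)⁻¹) (-(p i ^ 2)⁻¹ • proj (𝕜 := ℝ) i) p :=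
  (hasDerivAt_inv hp).comp_hasFDerivAt p (PiLp.hasFDerivAt_apply 2 p i)

theorem EuclideanSpace.hasFDerivAt_log_apply {i : ι} (hp : p i ≠ 0) :
    HasFDerivAt (fun q : EuclideanSpace ℝ ι => log (q i)) ((p i)⁻¹ • proj (𝕜 := ℝ) i) p :=
  (PiLp.hasFDerivAt_apply 2 p i).log hp

theorem fderiv_fderiv_apply_single_single [DecidableEq ι] {f : EuclideanSpace ℝ ι → ℝ}
    {g : ι → EuclideanSpace ℝ ι → ℝ} {H : ι → ι → ℝ}
    (hf : ∀ᶠ q in 𝓝 p, HasFDerivAt f (∑ k, g k q • EuclideanSpace.proj (𝕜 := ℝ) k) q)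
    (hg : ∀ j, HasFDerivAt (g j) (∑ i, H i j • EuclideanSpace.proj (𝕜 := ℝ) i) p) (i j : ι) :
    fderiv ℝ (fderiv ℝ f) p (EuclideanSpace.single i 1) (EuclideanSpace.single j 1) = H i j := by
  have hDf : fderiv ℝ f =ᶠ[𝓝 p] fun q => ∑ k, g k q • EuclideanSpace.proj k :=
    hf.mono fun q hq => hq.fderiv
  have hD := HasFDerivAt.fun_sum (u := .univ) fun k _ =>
    (hg k).smul_const (EuclideanSpace.proj (𝕜 := ℝ) k)
  rw [hDf.fderiv_eq, hD.fderiv]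
  simp

end Hessian

namespace IdealGas

open EuclideanSpace

local notation "ℝ³" => EuclideanSpace ℝ (Fin 3)

variable {c K R S₀ : ℝ} {p : ℝ³}

def posOctant : Set ℝ³ := {q | ∀ i, 0 < q i}

theorem isOpen_posOctant : IsOpen posOctant := by
  simpa only [posOctant, Set.ofPred_forall] using isOpen_iInter_of_finite fun i : Fin 3 =>
    isOpen_lt continuous_const (by fun_prop : Continuous fun q : ℝ³ => q i)

/-- `log (K·v·u^c·n^{-(c+1)})` split into a sum of logarithms, which is valid on `posOctant`. -/
noncomputable def logArg (c K : ℝ) (q : ℝ³) : ℝ :=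
  log K + log (q 1) + c * log (q 0) - (c + 1) * log (q 2)

theorem idealGasPotential_eq_of_mem_posOctant (hK : 0 < K) (hp : p ∈ posOctant) :
    idealGasPotential c K R S₀ p = -(p 2 * R * logArg c K p) - S₀ := by
  have hu := hp 0
  have hv := hp 1
  have hn := hp 2
  rw [idealGasPotential, idealGasEntropy, log_mul (by positivity) (by positivity),
    log_mul (by positivity) (by positivity), log_mul hK.ne' (by positivity),
    log_rpow hu, log_rpow hn, logArg]
  ring

theorem hasFDerivAt_logArg (hp : p ∈ posOctant) :
    HasFDerivAt (logArg c K)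
      ((c * (p 0)⁻¹) • proj (𝕜 := ℝ) 0 + (p 1)⁻¹ • proj 1 - ((c + 1) * (p 2)⁻¹) • proj 2) p := by
  have h0 := (hasFDerivAt_log_apply (hp 0).ne').const_mul c
  have h1 := hasFDerivAt_log_apply (hp 1).ne'
  have h2 := (hasFDerivAt_log_apply (hp 2).ne').const_mul (c + 1)
  refine (((h1.const_add (log K)).add h0).sub h2).congr_fderiv ?_
  ext q
  simp only [add_apply, sub_apply, smul_apply, PiLp.proj_apply, smul_eq_mul]
  ring

noncomputable def gradient (c K R : ℝ) : Fin 3 → ℝ³ → ℝ :=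
  ![fun q => -(R * c * q 2 * (q 0)⁻¹), fun q => -(R * q 2 * (q 1)⁻¹),
    fun q => (c + 1) * R - R * logArg c K q]

theorem hasFDerivAt_idealGasPotential (hK : 0 < K) (hp : p ∈ posOctant) :
    HasFDerivAt (idealGasPotential c K R S₀) (∑ k, gradient c K R k p • proj (𝕜 := ℝ) k) p := by
  have hEq : idealGasPotential c K R S₀ =ᶠ[𝓝 p] fun q => -(q 2 * R * logArg c K q) - S₀ :=
    eventually_of_mem (isOpen_posOctant.mem_nhds hp) fun q hq => idealGasPotential_eq_of_mem_posOctant hK hq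
  refine HasFDerivAt.congr_of_eventuallyEq ?_ hEq
  refine ((((PiLp.hasFDerivAt_apply 2 p 2).mul_const R).mul
    (hasFDerivAt_logArg (c := c) (K := K) hp)).neg.sub_const S₀).congr_fderiv ?_
  have hn := (hp 2).ne'
  ext q
  simp only [gradient, Fin.sum_univ_three, Matrix.cons_val_zero, Matrix.cons_val_one, Matrix.cons_val,
    add_apply, sub_apply, neg_apply, smul_apply, PiLp.proj_apply, smul_eq_mul]
  field_simp
  ring

noncomputable def hessian (c R : ℝ) (p : ℝ³) : Matrix (Fin 3) (Fin 3) ℝ :=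
  R • !![c * p 2 / (p 0) ^ 2, 0, -c / p 0;
         0, p 2 / (p 1) ^ 2, -1 / p 1;
         -c / p 0, -1 / p 1, (c + 1) / p 2]

theorem hasFDerivAt_gradient (hp : p ∈ posOctant) (j : Fin 3) :
    HasFDerivAt (gradient c K R j) (∑ i, hessian c R p i j • proj (𝕜 := ℝ) i) p := by
  have h0 := (hp 0).ne'
  have h1 := (hp 1).ne'
  fin_cases j
  on_goal 1 => refine ((((PiLp.hasFDerivAt_apply 2 p 2).const_mul (R * c)).mul
    (hasFDerivAt_inv_apply h0)).neg).congr_fderiv ?_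
  on_goal 2 => refine ((((PiLp.hasFDerivAt_apply 2 p 2).const_mul R).mul
    (hasFDerivAt_inv_apply h1)).neg).congr_fderiv ?_
  on_goal 3 => refine (((hasFDerivAt_logArg hp).const_mul R).const_sub ((c + 1) * R)).congr_fderiv ?_
  all_goals
    ext q
    simp only [hessian, Fin.sum_univ_three, Fin.zero_eta, Fin.mk_one, Fin.reduceFinMk,
      Matrix.smul_apply, Matrix.of_apply, Matrix.cons_val', Matrix.cons_val_zero, Matrix.cons_val_one,
      Matrix.cons_val, Matrix.cons_val_fin_one, add_apply, sub_apply, neg_apply, smul_apply,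
      PiLp.proj_apply, smul_eq_mul]
    field_simp
    ring

theorem hessian_mulVec_self (h0 : p 0 ≠ 0) (h1 : p 1 ≠ 0) (h2 : p 2 ≠ 0) :
    (hessian c R p).mulVec ![p 0, p 1, p 2] = 0 := by
  ext k
  fin_cases k <;>
  · simp only [hessian, Matrix.mulVec, dotProduct, Fin.sum_univ_three, Fin.zero_eta, Fin.mk_one,
      Fin.reduceFinMk, Matrix.smul_apply, Matrix.of_apply, Matrix.cons_val', Matrix.cons_val_zero,
      Matrix.cons_val_one, Matrix.cons_val, Matrix.cons_val_fin_one, smul_eq_mul, Pi.zero_apply]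
    field_simp
    ring

end IdealGas

open IdealGas in
theorem idealGas_hessian_matrix_and_euler_null_general
    (c K R S₀ : ℝ) (hK : 0 < K)
    (p : EuclideanSpace ℝ (Fin 3)) (hu : 0 < p 0) (hv : 0 < p 1) (hn : 0 < p 2) :
    (∀ i j : Fin 3,
        fderiv ℝ (fderiv ℝ (idealGasPotential c K R S₀)) p
            (EuclideanSpace.single i 1) (EuclideanSpace.single j 1) =
          (R • !![c * p 2 / (p 0) ^ 2, 0, -c / p 0;
                  0, p 2 / (p 1) ^ 2, -1 / p 1;
                  -c / p 0, -1 / p 1, (c + 1) / p 2]) i j) ∧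
      (R • !![c * p 2 / (p 0) ^ 2, 0, -c / p 0;
              0, p 2 / (p 1) ^ 2, -1 / p 1;
              -c / p 0, -1 / p 1, (c + 1) / p 2]).mulVec ![p 0, p 1, p 2] = 0 := by
  have hp : p ∈ posOctant := fun i => by fin_cases i <;> assumption
  have hgrad : ∀ᶠ q in 𝓝 p, HasFDerivAt (idealGasPotential c K R S₀)
      (∑ k, gradient c K R k q • EuclideanSpace.proj (𝕜 := ℝ) k) q := by
    filter_upwards [isOpen_posOctant.mem_nhds hp] with q hq
    exact hasFDerivAt_idealGasPotential hK hq
  exact ⟨fderiv_fderiv_apply_single_single hgrad (hasFDerivAt_gradient hp),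
    hessian_mulVec_self hu.ne' hv.ne' hn.ne'⟩

/-- **The Hessian of the negative ideal gas entropy.**
At any point `p = (u,v,n)` of the positive octant, the Hessian of `−S` is the
matrix `R·[[c·n/u², 0, −c/u], [0, n/v², −1/v], [−c/u, −1/v, (c+1)/n]]` in the
coordinates `(u,v,n)`, and this matrix annihilates the Euler vector `(u,v,n)`. -/
theorem idealGas_hessian_matrix_and_euler_null
    (c K R S₀ : ℝ) (hc : 0 < c) (hR : 0 < R) (hK : 0 < K)
    (p : EuclideanSpace ℝ (Fin 3)) (hu : 0 < p 0) (hv : 0 < p 1) (hn : 0 < p 2) :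
    (∀ i j : Fin 3,
        fderiv ℝ (fderiv ℝ (idealGasPotential c K R S₀)) p
            (EuclideanSpace.single i 1) (EuclideanSpace.single j 1) =
          (R • !![c * p 2 / (p 0) ^ 2, 0, -c / p 0;
                  0, p 2 / (p 1) ^ 2, -1 / p 1;
                  -c / p 0, -1 / p 1, (c + 1) / p 2]) i j) ∧
      (R • !![c * p 2 / (p 0) ^ 2, 0, -c / p 0;
              0, p 2 / (p 1) ^ 2, -1 / p 1;
              -c / p 0, -1 / p 1, (c + 1) / p 2]).mulVec ![p 0, p 1, p 2] = 0 :=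
  idealGas_hessian_matrix_and_euler_null_general c K R S₀ hK p hu hv hn
end

section
/- Let c, R > 0 and let u, v, n > 0. Then the matrix G = R·[[c·n/u², 0, −c/u], [0, n/v², −1/v], [−c/u, −1/v, (c+1)/n]] is symmetric and positive semidefinite, and its kernel is exactly the one-dimensional span of the vector (u, v, n). (The ideal gas Hessian metric g = ∇̄d(−S) is a degenerate Hessian metric whose null space is spanned by the Euler vector field.) -/
/-!
Up to an affine function, `-S = -R n (c log (u / n) + log (v / n))`, a function that is homogeneous of
degree one. Its Hessian is `R (c n · ω₁ ⊗ ω₁ + n · ω₂ ⊗ ω₂)` with `ω₁ = d log (u / n)` and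
`ω₂ = d log (v / n)`: a sum of rank-one squares with positive weights, hence positive semidefinite
with kernel `ker ω₁ ∩ ker ω₂`, which is the line through the Euler vector `(u, v, n)`.
-/

open Matrix

/-- The Hessian matrix of the negative ideal gas entropy `−S` at a point
`(u, v, n)` of the positive octant:
`G = R·[[c·n/u², 0, −c/u], [0, n/v², −1/v], [−c/u, −1/v, (c+1)/n]]`. -/
noncomputable def idealGasHessianMatrix (c R u v n : ℝ) : Matrix (Fin 3) (Fin 3) ℝ :=
  R • !![c * n / u ^ 2, 0, -c / u;
         0, n / v ^ 2, -1 / v;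
         -c / u, -1 / v, (c + 1) / n]

namespace Matrix

variable {𝕜 m ι : Type*} [CommRing 𝕜] [Fintype ι] (a : ι → 𝕜) (w : ι → m → 𝕜)

theorem isSymm_sum_smul_vecMulVec_self : (∑ i, a i • vecMulVec (w i) (w i)).IsSymm := by
  simp [IsSymm, transpose_sum, transpose_smul, transpose_vecMulVec]

variable [Fintype m] (x : m → 𝕜)

theorem sum_smul_vecMulVec_self_mulVec :
    (∑ i, a i • vecMulVec (w i) (w i)) *ᵥ x = ∑ i, (a i * (w i ⬝ᵥ x)) • w i := by
  simp only [sum_mulVec, smul_mulVec, vecMulVec_mulVec, op_smul_eq_smul, smul_smul]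

theorem dotProduct_sum_smul_vecMulVec_self_mulVec :
    x ⬝ᵥ (∑ i, a i • vecMulVec (w i) (w i)) *ᵥ x = ∑ i, a i * (w i ⬝ᵥ x) ^ 2 := by
  rw [sum_smul_vecMulVec_self_mulVec, dotProduct_comm, sum_dotProduct]
  simp only [smul_dotProduct, smul_eq_mul, sq, mul_assoc]

variable [LinearOrder 𝕜] [IsStrictOrderedRing 𝕜] {a}

theorem dotProduct_sum_smul_vecMulVec_self_mulVec_nonneg (ha : ∀ i, 0 ≤ a i) :
    0 ≤ x ⬝ᵥ (∑ i, a i • vecMulVec (w i) (w i)) *ᵥ x := by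
  rw [dotProduct_sum_smul_vecMulVec_self_mulVec]
  exact Finset.sum_nonneg fun i _ => mul_nonneg (ha i) (sq_nonneg _)

theorem sum_smul_vecMulVec_self_mulVec_eq_zero_iff (ha : ∀ i, 0 < a i) :
    (∑ i, a i • vecMulVec (w i) (w i)) *ᵥ x = 0 ↔ ∀ i, w i ⬝ᵥ x = 0 := by
  refine ⟨fun h i => ?_, fun h => by simp [sum_smul_vecMulVec_self_mulVec, h]⟩
  have hsum : ∑ i, a i * (w i ⬝ᵥ x) ^ 2 = 0 := by
    rw [← dotProduct_sum_smul_vecMulVec_self_mulVec, h, dotProduct_zero]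
  have hi := (Finset.sum_eq_zero_iff_of_nonneg fun i _ => mul_nonneg (ha i).le (sq_nonneg _)).1
    hsum i (Finset.mem_univ i)
  simpa [(ha i).ne'] using hi

end Matrix

noncomputable def idealGasWeight (c R n : ℝ) : Fin 2 → ℝ := ![R * c * n, R * n]

/-- The covectors `ω₁ = d log (u / n)` and `ω₂ = d log (v / n)`. -/
noncomputable def idealGasCovector (u v n : ℝ) : Fin 2 → Fin 3 → ℝ :=
  ![![u⁻¹, 0, -n⁻¹], ![0, v⁻¹, -n⁻¹]]

theorem idealGasHessianMatrix_eq_sum {c R u v n : ℝ} (hn : n ≠ 0) :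
    idealGasHessianMatrix c R u v n =
      ∑ i, idealGasWeight c R n i •
        vecMulVec (idealGasCovector u v n i) (idealGasCovector u v n i) := by
  ext i j
  fin_cases i <;> fin_cases j <;>
    simp [idealGasHessianMatrix, idealGasWeight, idealGasCovector] <;>
    field_simp

theorem idealGasWeight_pos {c R n : ℝ} (hc : 0 < c) (hR : 0 < R) (hn : 0 < n) (i : Fin 2) :
    0 < idealGasWeight c R n i := by
  fin_cases i <;> simp [idealGasWeight] <;> positivity

theorem forall_idealGasCovector_dotProduct_eq_zero_iff {u v n : ℝ} (hu : u ≠ 0) (hv : v ≠ 0)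
    (hn : n ≠ 0) (x : Fin 3 → ℝ) :
    (∀ i, idealGasCovector u v n i ⬝ᵥ x = 0) ↔ ∃ t : ℝ, x = t • ![u, v, n] := by
  simp only [Fin.forall_fin_two, idealGasCovector, dotProduct, Fin.sum_univ_three, cons_val_zero,
    cons_val_one, cons_val, zero_mul, add_zero, zero_add, neg_mul, smul_cons, smul_eq_mul, smul_empty]
  constructor
  · rintro ⟨h0, h1⟩
    field_simp at h0 h1
    refine ⟨x 2 / n, funext fun i => ?_⟩
    fin_cases i <;> simp <;> field_simp <;> linarith
  · rintro ⟨t, rfl⟩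
    simp only [cons_val_zero, cons_val_one, cons_val]
    constructor <;> field_simp <;> ring

/-- **The ideal gas Hessian metric is degenerate with null space spanned by the
Euler vector field.** For `c, R > 0` and `u, v, n > 0`, the matrix `G` is
symmetric and positive semidefinite, and its kernel is exactly the span of the
Euler vector `(u, v, n)`. -/
theorem idealGas_hessian_psd_kernel
    (c R u v n : ℝ) (hc : 0 < c) (hR : 0 < R)
    (hu : 0 < u) (hv : 0 < v) (hn : 0 < n) :
    (idealGasHessianMatrix c R u v n).IsSymm ∧
    (∀ x : Fin 3 → ℝ, 0 ≤ x ⬝ᵥ (idealGasHessianMatrix c R u v n).mulVec x) ∧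
    (∀ x : Fin 3 → ℝ,
      (idealGasHessianMatrix c R u v n).mulVec x = 0 ↔ ∃ t : ℝ, x = t • ![u, v, n]) := by
  have hw := idealGasWeight_pos hc hR hn
  rw [idealGasHessianMatrix_eq_sum hn.ne']
  refine ⟨isSymm_sum_smul_vecMulVec_self _ _,
    fun x => dotProduct_sum_smul_vecMulVec_self_mulVec_nonneg _ x fun i => (hw i).le,
    fun x => ?_⟩
  rw [sum_smul_vecMulVec_self_mulVec_eq_zero_iff _ x hw,
    forall_idealGasCovector_dotProduct_eq_zero_iff hu.ne' hv.ne' hn.ne']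
end
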